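/- arXiv:1706.05333 — 5 statements merged into one kernel-verified Lean document; each statement's English description precedes it below -/
import Mathlib

section
/- Every (ε,δ)-triple (A,B,C) over F is isomorphic to a direct sum (I_k, B₀, C₀) ⊕ (A₁, B₁, C₁) in which (I_k, B₀, C₀) is strictly regular (k ≥ 0, B₀* = εB₀, C₀* = δC₀ of size k×k) and (A₁, B₁, C₁) is strictly singular. -/
open Matrix

/-- Cast a matrix along equalities of its dimensions. -/
def castM {F : Type*} {m n m' n' : ℕ} (hm : m = m') (hn : n = n')
    (M : Matrix (Fin m') (Fin n') F) : Matrix (Fin m) (Fin n) F :=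
  M.submatrix (Fin.cast hm) (Fin.cast hn)

/-- The adjoint `M* = (M̃)ᵀ` of a matrix with respect to the involution `inv`. -/
def adjM {F : Type*} (inv : F → F) {p q : ℕ} (M : Matrix (Fin p) (Fin q) F) :
    Matrix (Fin q) (Fin p) F :=
  Matrix.of fun i j => inv (M j i)

/-- Direct sum of two rectangular matrices (blocks placed diagonally, zeros elsewhere). -/
def dsumM {F : Type*} [Zero F] {m₁ n₁ m₂ n₂ : ℕ} (M₁ : Matrix (Fin m₁) (Fin n₁) F)
    (M₂ : Matrix (Fin m₂) (Fin n₂) F) :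
    Matrix (Fin (m₁ + m₂)) (Fin (n₁ + n₂)) F :=
  Matrix.reindex finSumFinEquiv finSumFinEquiv (Matrix.fromBlocks M₁ 0 0 M₂)

/-- `Z_r`: the `r×r` matrix with `(i,j)` entry `1` iff `i+j = r+1` (1-indexed). -/
def Zm (F : Type*) [Zero F] [One F] (r : ℕ) : Matrix (Fin r) (Fin r) F :=
  Matrix.of fun i j => if (i : ℕ) + (j : ℕ) = r - 1 then 1 else 0

/-- `Z_{r,ε}`: equals `Z_r` for `ε = 1`, and `[[0, -Z_{r/2}],[Z_{r/2},0]]` for `ε = -1`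
(and even `r`). -/
def ZmS {F : Type*} [Zero F] [One F] (r : ℕ) (ε : F) : Matrix (Fin r) (Fin r) F :=
  Matrix.of fun i j =>
    if (i : ℕ) + (j : ℕ) = r - 1 then (if (i : ℕ) < r / 2 then ε else 1) else 0

/-- `F_r`: the `(r-1)×r` matrix with `(i,i)` entries `1`, all other entries `0`. -/
def Fm (F : Type*) [Zero F] [One F] (r : ℕ) : Matrix (Fin (r - 1)) (Fin r) F :=
  Matrix.of fun i j => if (i : ℕ) = (j : ℕ) then 1 else 0

/-- `G_r`: the `(r-1)×r` matrix with `(i,i+1)` entries `1`, all other entries `0`. -/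
def Gm (F : Type*) [Zero F] [One F] (r : ℕ) : Matrix (Fin (r - 1)) (Fin r) F :=
  Matrix.of fun i j => if (i : ℕ) + 1 = (j : ℕ) then 1 else 0

/-- `J_r(μ)`: the upper triangular `r×r` Jordan block with eigenvalue `μ`. -/
def Jm {F : Type*} [Zero F] [One F] (r : ℕ) (μ : F) : Matrix (Fin r) (Fin r) F :=
  Matrix.of fun i j =>
    if (i : ℕ) = (j : ℕ) then μ else if (i : ℕ) + 1 = (j : ℕ) then 1 else 0

/-- `H_r(λ)`: the `r×r` matrix with `λ` on the antidiagonal `i+j = r+1` and `1`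
on the adjacent antidiagonal `i+j = r+2` (1-indexed). -/
def Hm {F : Type*} [Zero F] [One F] (r : ℕ) (lam : F) : Matrix (Fin r) (Fin r) F :=
  Matrix.of fun i j =>
    if (i : ℕ) + (j : ℕ) = r - 1 then lam
    else if (i : ℕ) + (j : ℕ) = r then 1 else 0

/-- `M^{⊘η} = [[0, η M*],[M, 0]]`, a square matrix of size `q + p` for `M` of size `p × q`. -/
def osl {F : Type*} [Ring F] (inv : F → F) (η : F) {p q : ℕ}
    (M : Matrix (Fin p) (Fin q) F) : Matrix (Fin (q + p)) (Fin (q + p)) F :=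
  Matrix.reindex finSumFinEquiv finSumFinEquiv
    (Matrix.fromBlocks 0 (η • adjM inv M) M 0)

/-- A matrix triple `(A, B, C)` of size `n × m`: `A : n×m`, `B : m×m`, `C : n×n`. -/
structure MTriple (F : Type*) [Ring F] where
  m : ℕ
  n : ℕ
  A : Matrix (Fin n) (Fin m) F
  B : Matrix (Fin m) (Fin m) F
  C : Matrix (Fin n) (Fin n) F

/-- Direct sum of matrix triples (blockwise). -/
def MTriple.dsum {F : Type*} [Ring F] (T T' : MTriple F) : MTriple F where
  m := T.m + T'.m
  n := T.n + T'.n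
  A := dsumM T.A T'.A
  B := dsumM T.B T'.B
  C := dsumM T.C T'.C

/-- Direct sum of a list of matrix triples. -/
def dsumList {F : Type*} [Ring F] (L : List (MTriple F)) : MTriple F :=
  L.foldr MTriple.dsum ⟨0, 0, 0, 0, 0⟩

/-- Isomorphism of matrix triples: `A' = S⁻¹ A R`, `B' = R* B R`, `C' = S* C S`
with invertible `R`, `S`, where `*` is the `inv`-adjoint. -/
def MTriple.Iso {F : Type*} [Ring F] (inv : F → F) (T T' : MTriple F) : Prop :=
  ∃ (hm : T.m = T'.m) (hn : T.n = T'.n)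
    (R : Matrix (Fin T.m) (Fin T.m) F) (S : Matrix (Fin T.n) (Fin T.n) F),
    IsUnit R ∧ IsUnit S ∧
    S * castM hn hm T'.A = T.A * R ∧
    castM hm hm T'.B = adjM inv R * T.B * R ∧
    castM hn hn T'.C = adjM inv S * T.C * S

/-- A triple is regular if its first matrix is square and invertible. -/
def MTriple.Regular {F : Type*} [Ring F] (T : MTriple F) : Prop :=
  ∃ h : T.m = T.n, IsUnit (castM h rfl T.A)

/-- A triple is strictly regular if its first matrix is an identity matrix. -/
def MTriple.StrictlyRegular {F : Type*} [Ring F] (T : MTriple F) : Prop :=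
  ∃ h : T.m = T.n, castM h rfl T.A = 1

/-- A triple is strictly singular if it is not isomorphic to a direct sum having
a regular direct summand of nonzero size. -/
def MTriple.StrictlySingular {F : Type*} [Ring F] (inv : F → F) (T : MTriple F) : Prop :=
  ¬ ∃ T₁ T₂ : MTriple F, T₁.Regular ∧ T₁.m ≠ 0 ∧
      (T.Iso inv (T₁.dsum T₂) ∨ T.Iso inv (T₂.dsum T₁))

/-!
Regular summands are split off one at a time. If `T` is not strictly singular, then
`T ≅ R ⊕ T₂` with `R` regular of positive size (after commuting the summands), and
`R = (A, B, C) ≅ (I, (A⁻¹)* B A⁻¹, C)` is strictly regular. Isomorphisms and the splitting of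
block-diagonal matrices both preserve the conditions `B* = εB`, `C* = δC` for signs `ε, δ = ±1`,
so `T₂` is again an `(ε,δ)`-triple of smaller size, and induction on `m + n` together with the
associativity of `⊕` concludes. The involution is packaged as a `StarRing` structure on `F`, which
turns `adjM inv` into the conjugate transpose `ᴴ`.
-/

section MatrixLemmas

variable {F : Type*}

lemma castM_rfl {p q : ℕ} (M : Matrix (Fin p) (Fin q) F) : castM rfl rfl M = M := rfl

lemma adjM_star [Star F] {p q : ℕ} (M : Matrix (Fin p) (Fin q) F) : adjM star M = Mᴴ := rfl

variable {m₁ n₁ m₂ n₂ m₃ n₃ : ℕ}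

section Zero

variable [Zero F]

lemma dsumM_apply (M₁ : Matrix (Fin m₁) (Fin n₁) F) (M₂ : Matrix (Fin m₂) (Fin n₂) F)
    (i : Fin (m₁ + m₂)) (j : Fin (n₁ + n₂)) :
    dsumM M₁ M₂ i j =
      if hi : (i : ℕ) < m₁ then
        if hj : (j : ℕ) < n₁ then M₁ ⟨i, hi⟩ ⟨j, hj⟩ else 0
      else
        if hj : (j : ℕ) < n₁ then 0 else M₂ ⟨i - m₁, by omega⟩ ⟨j - n₁, by omega⟩ := by
  induction i using Fin.addCases <;> induction j using Fin.addCases <;> simp [dsumM]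

lemma dsumM_comm (M₁ : Matrix (Fin m₁) (Fin n₁) F) (M₂ : Matrix (Fin m₂) (Fin n₂) F) :
    dsumM M₂ M₁ = (dsumM M₁ M₂).submatrix finAddFlip finAddFlip := by
  ext i j
  induction i using Fin.addCases <;> induction j using Fin.addCases <;> simp [dsumM]

lemma dsumM_assoc (M₁ : Matrix (Fin m₁) (Fin n₁) F) (M₂ : Matrix (Fin m₂) (Fin n₂) F)
    (M₃ : Matrix (Fin m₃) (Fin n₃) F) :
    dsumM (dsumM M₁ M₂) M₃ =
      (dsumM M₁ (dsumM M₂ M₃)).submatrix (finCongr (add_assoc ..)) (finCongr (add_assoc ..)) := by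
  ext i j
  simp only [dsumM_apply, submatrix_apply, finCongr_apply, Fin.val_cast]
  split_ifs <;> first | rfl | omega | (congr 1 <;> ext <;> simp only <;> omega)

lemma dsumM_empty_left (M₀ : Matrix (Fin 0) (Fin 0) F) {m n : ℕ} (M : Matrix (Fin m) (Fin n) F) :
    dsumM M₀ M = M.submatrix (finCongr (zero_add m)) (finCongr (zero_add n)) := by
  ext i j
  simp only [dsumM_apply, submatrix_apply, finCongr_apply]
  split_ifs <;> first | omega | rfl

lemma dsumM_inj {M₁ M₁' : Matrix (Fin m₁) (Fin n₁) F} {M₂ M₂' : Matrix (Fin m₂) (Fin n₂) F} :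
    dsumM M₁ M₂ = dsumM M₁' M₂' ↔ M₁ = M₁' ∧ M₂ = M₂' := by
  rw [dsumM, dsumM, (reindex _ _).injective.eq_iff, fromBlocks_inj]
  simp

end Zero

section Semiring

variable [Semiring F]

lemma dsumM_mul {k₁ k₂ : ℕ} (M₁ : Matrix (Fin m₁) (Fin k₁) F) (N₁ : Matrix (Fin k₁) (Fin n₁) F)
    (M₂ : Matrix (Fin m₂) (Fin k₂) F) (N₂ : Matrix (Fin k₂) (Fin n₂) F) :
    dsumM M₁ M₂ * dsumM N₁ N₂ = dsumM (M₁ * N₁) (M₂ * N₂) := by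
  simp [dsumM, submatrix_mul_equiv, fromBlocks_multiply]

lemma dsumM_one :
    dsumM (1 : Matrix (Fin m₁) (Fin m₁) F) (1 : Matrix (Fin m₂) (Fin m₂) F) = 1 := by
  simp [dsumM, fromBlocks_one]

lemma smul_dsumM (c : F) (M₁ : Matrix (Fin m₁) (Fin n₁) F) (M₂ : Matrix (Fin m₂) (Fin n₂) F) :
    c • dsumM M₁ M₂ = dsumM (c • M₁) (c • M₂) := by
  have h : fromBlocks (c • M₁) 0 0 (c • M₂) = c • fromBlocks M₁ 0 0 M₂ := by
    simp [fromBlocks_smul]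
  rw [dsumM, dsumM, h]
  rfl

lemma isUnit_dsumM {M₁ : Matrix (Fin m₁) (Fin m₁) F} {M₂ : Matrix (Fin m₂) (Fin m₂) F}
    (h₁ : IsUnit M₁) (h₂ : IsUnit M₂) : IsUnit (dsumM M₁ M₂) := by
  obtain ⟨N₁, hl₁, hr₁⟩ := isUnit_iff_exists.1 h₁
  obtain ⟨N₂, hl₂, hr₂⟩ := isUnit_iff_exists.1 h₂
  exact isUnit_iff_exists.2 ⟨dsumM N₁ N₂, by rw [dsumM_mul, hl₁, hl₂, dsumM_one],
    by rw [dsumM_mul, hr₁, hr₂, dsumM_one]⟩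

lemma isUnit_permMatrix {n : Type*} [DecidableEq n] [Fintype n] (σ : Equiv.Perm n) :
    IsUnit (σ.permMatrix F) := by
  simpa using (Group.isUnit σ⁻¹).map (permMatrixHom (n := n) (R := F))

lemma conjTranspose_dsumM [StarRing F] (M₁ : Matrix (Fin m₁) (Fin n₁) F)
    (M₂ : Matrix (Fin m₂) (Fin n₂) F) : (dsumM M₁ M₂)ᴴ = dsumM M₁ᴴ M₂ᴴ := by
  simp [dsumM, fromBlocks_conjTranspose]

end Semiring

lemma conjTranspose_mul_mul_eq_smul [Ring F] [StarRing F] {n k : Type*} [Fintype n] {ε : F}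
    (hε : ε = 1 ∨ ε = -1) {B : Matrix n n F} (hB : Bᴴ = ε • B) (R : Matrix n k F) :
    (Rᴴ * B * R)ᴴ = ε • (Rᴴ * B * R) := by
  rcases hε with rfl | rfl <;> simp_all [Matrix.mul_assoc]

end MatrixLemmas

namespace MTriple

variable {F : Type*} [Ring F]

def empty (F : Type*) [Ring F] : MTriple F := ⟨0, 0, 0, 0, 0⟩

lemma strictlyRegular_empty : (empty F).StrictlyRegular :=
  ⟨rfl, Matrix.ext fun i => i.elim0⟩

lemma StrictlyRegular.dsum {T₁ T₂ : MTriple F} (h₁ : T₁.StrictlyRegular)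
    (h₂ : T₂.StrictlyRegular) : (T₁.dsum T₂).StrictlyRegular := by
  obtain ⟨m₁, n₁, A₁, B₁, C₁⟩ := T₁
  obtain ⟨m₂, n₂, A₂, B₂, C₂⟩ := T₂
  dsimp only [StrictlyRegular] at h₁ h₂
  obtain ⟨rfl, rfl : A₁ = 1⟩ := h₁
  obtain ⟨rfl, rfl : A₂ = 1⟩ := h₂
  exact ⟨rfl, dsumM_one⟩

lemma Iso.m_eq {inv : F → F} {T T' : MTriple F} (h : T.Iso inv T') : T.m = T'.m := h.1

lemma Iso.n_eq {inv : F → F} {T T' : MTriple F} (h : T.Iso inv T') : T.n = T'.n := h.2.1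

variable [StarRing F]

lemma Iso.trans {T T' T'' : MTriple F} (h : T.Iso star T') (h' : T'.Iso star T'') :
    T.Iso star T'' := by
  obtain ⟨m', n', A', B', C'⟩ := T'
  obtain ⟨m'', n'', A'', B'', C''⟩ := T''
  dsimp only [Iso] at h h'
  obtain ⟨rfl, rfl, R, S, hR, hS, hA, hB, hC⟩ := h
  obtain ⟨rfl, rfl, R', S', hR', hS', hA', hB', hC'⟩ := h'
  simp only [castM_rfl, adjM_star] at hA hB hC hA' hB' hC'
  refine ⟨rfl, rfl, R * R', S * S', hR.mul hR', hS.mul hS', ?_, ?_, ?_⟩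
  · rw [castM_rfl, Matrix.mul_assoc, hA', ← Matrix.mul_assoc, hA, Matrix.mul_assoc]
  · simp [castM_rfl, adjM_star, hB', hB, Matrix.mul_assoc]
  · simp [castM_rfl, adjM_star, hC', hC, Matrix.mul_assoc]

lemma Iso.dsum {T₁ T₁' T₂ T₂' : MTriple F} (h₁ : T₁.Iso star T₁') (h₂ : T₂.Iso star T₂') :
    (T₁.dsum T₂).Iso star (T₁'.dsum T₂') := by
  obtain ⟨m₁, n₁, A₁, B₁, C₁⟩ := T₁'
  obtain ⟨m₂, n₂, A₂, B₂, C₂⟩ := T₂'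
  dsimp only [Iso] at h₁ h₂
  obtain ⟨rfl, rfl, R₁, S₁, hR₁, hS₁, hA₁, hB₁, hC₁⟩ := h₁
  obtain ⟨rfl, rfl, R₂, S₂, hR₂, hS₂, hA₂, hB₂, hC₂⟩ := h₂
  simp only [castM_rfl, adjM_star] at hA₁ hB₁ hC₁ hA₂ hB₂ hC₂
  refine ⟨rfl, rfl, dsumM R₁ R₂, dsumM S₁ S₂, isUnit_dsumM hR₁ hR₂, isUnit_dsumM hS₁ hS₂,
    ?_, ?_, ?_⟩
  · change dsumM S₁ S₂ * dsumM A₁ A₂ = dsumM T₁.A T₂.A * dsumM R₁ R₂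
    rw [dsumM_mul, dsumM_mul, hA₁, hA₂]
  · change dsumM B₁ B₂ = (dsumM R₁ R₂)ᴴ * dsumM T₁.B T₂.B * dsumM R₁ R₂
    rw [conjTranspose_dsumM, dsumM_mul, dsumM_mul, hB₁, hB₂]
  · change dsumM C₁ C₂ = (dsumM S₁ S₂)ᴴ * dsumM T₁.C T₂.C * dsumM S₁ S₂
    rw [conjTranspose_dsumM, dsumM_mul, dsumM_mul, hC₁, hC₂]

lemma iso_of_submatrix {T T' : MTriple F} (em : Fin T'.m ≃ Fin T.m) (en : Fin T'.n ≃ Fin T.n)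
    (hA : T'.A = T.A.submatrix en em) (hB : T'.B = T.B.submatrix em em)
    (hC : T'.C = T.C.submatrix en en) : T.Iso star T' := by
  have hm : T.m = T'.m := by simpa using (Fintype.card_congr em).symm
  have hn : T.n = T'.n := by simpa using (Fintype.card_congr en).symm
  set σ : Equiv.Perm (Fin T.m) := (finCongr hm).trans em
  set τ : Equiv.Perm (Fin T.n) := (finCongr hn).trans en
  refine ⟨hm, hn, σ⁻¹.permMatrix F, τ⁻¹.permMatrix F, isUnit_permMatrix _, isUnit_permMatrix _,
    ?_, ?_, ?_⟩
  · rw [show castM hn hm T'.A = T.A.submatrix τ σ by rw [hA]; rfl]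
    simp [PEquiv.toMatrix_toPEquiv_mul, PEquiv.mul_toMatrix_toPEquiv, Equiv.Perm.inv_def]
  · rw [show castM hm hm T'.B = T.B.submatrix σ σ by rw [hB]; rfl]
    simp [adjM_star, PEquiv.toMatrix_toPEquiv_mul, PEquiv.mul_toMatrix_toPEquiv,
      Equiv.Perm.inv_def]
  · rw [show castM hn hn T'.C = T.C.submatrix τ τ by rw [hC]; rfl]
    simp [adjM_star, PEquiv.toMatrix_toPEquiv_mul, PEquiv.mul_toMatrix_toPEquiv,
      Equiv.Perm.inv_def]

lemma iso_dsum_comm (T₁ T₂ : MTriple F) : (T₁.dsum T₂).Iso star (T₂.dsum T₁) :=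
  iso_of_submatrix finAddFlip finAddFlip (dsumM_comm _ _) (dsumM_comm _ _) (dsumM_comm _ _)

lemma iso_dsum_assoc (T₁ T₂ T₃ : MTriple F) :
    (T₁.dsum (T₂.dsum T₃)).Iso star ((T₁.dsum T₂).dsum T₃) :=
  iso_of_submatrix (finCongr (add_assoc ..)) (finCongr (add_assoc ..))
    (dsumM_assoc _ _ _) (dsumM_assoc _ _ _) (dsumM_assoc _ _ _)

lemma iso_empty_dsum (T : MTriple F) : T.Iso star ((empty F).dsum T) :=
  iso_of_submatrix (finCongr (zero_add _)) (finCongr (zero_add _))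
    (dsumM_empty_left _ _) (dsumM_empty_left _ _) (dsumM_empty_left _ _)

lemma Regular.exists_iso_strictlyRegular {T : MTriple F} (hT : T.Regular) :
    ∃ T' : MTriple F, T'.StrictlyRegular ∧ T.Iso star T' := by
  obtain ⟨m, n, A, B, C⟩ := T
  dsimp only [Regular] at hT
  obtain ⟨rfl, hA⟩ := hT
  obtain ⟨N, hAN, hNA⟩ := isUnit_iff_exists.1 hA
  refine ⟨⟨m, m, 1, Nᴴ * B * N, C⟩, ⟨rfl, rfl⟩, rfl, rfl, N, 1,
    isUnit_iff_exists.2 ⟨A, hNA, hAN⟩, isUnit_one, (Matrix.mul_one 1).trans hAN.symm, rfl, ?_⟩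
  simp [castM_rfl, adjM_star]

lemma exists_iso_regular_dsum_of_not_strictlySingular {T : MTriple F}
    (hT : ¬ T.StrictlySingular star) :
    ∃ R T₂ : MTriple F, R.Regular ∧ R.m ≠ 0 ∧ T.Iso star (R.dsum T₂) := by
  obtain ⟨R, T₂, hR, hRm, hT | hT⟩ := not_not.1 hT
  · exact ⟨R, T₂, hR, hRm, hT⟩
  · exact ⟨R, T₂, hR, hRm, hT.trans (iso_dsum_comm T₂ R)⟩

def IsEpsDeltaTriple (ε δ : F) (T : MTriple F) : Prop :=
  T.Bᴴ = ε • T.B ∧ T.Cᴴ = δ • T.C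

variable {ε δ : F}

lemma isEpsDeltaTriple_empty : (empty F).IsEpsDeltaTriple ε δ :=
  ⟨Matrix.ext fun i => i.elim0, Matrix.ext fun i => i.elim0⟩

lemma isEpsDeltaTriple_dsum_iff {T₁ T₂ : MTriple F} :
    (T₁.dsum T₂).IsEpsDeltaTriple ε δ ↔ T₁.IsEpsDeltaTriple ε δ ∧ T₂.IsEpsDeltaTriple ε δ := by
  change (dsumM T₁.B T₂.B)ᴴ = ε • dsumM T₁.B T₂.B ∧ (dsumM T₁.C T₂.C)ᴴ = δ • dsumM T₁.C T₂.C ↔ _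
  rw [conjTranspose_dsumM, conjTranspose_dsumM, smul_dsumM, smul_dsumM, dsumM_inj, dsumM_inj]
  exact and_and_and_comm

lemma IsEpsDeltaTriple.of_iso (hε : ε = 1 ∨ ε = -1) (hδ : δ = 1 ∨ δ = -1) {T T' : MTriple F}
    (h : T.Iso star T') (hT : T.IsEpsDeltaTriple ε δ) : T'.IsEpsDeltaTriple ε δ := by
  obtain ⟨m', n', A', B', C'⟩ := T'
  dsimp only [Iso] at h
  obtain ⟨rfl, rfl, R, S, -, -, -, hB, hC⟩ := h
  simp only [castM_rfl, adjM_star] at hB hC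
  exact ⟨hB ▸ conjTranspose_mul_mul_eq_smul hε hT.1 R,
    hC ▸ conjTranspose_mul_mul_eq_smul hδ hT.2 S⟩

theorem exists_iso_strictlyRegular_dsum_strictlySingular (hε : ε = 1 ∨ ε = -1)
    (hδ : δ = 1 ∨ δ = -1) (T : MTriple F) (hT : T.IsEpsDeltaTriple ε δ) :
    ∃ T₀ T₁ : MTriple F, T₀.StrictlyRegular ∧ T₀.IsEpsDeltaTriple ε δ ∧
      T₁.StrictlySingular star ∧ T₁.IsEpsDeltaTriple ε δ ∧ T.Iso star (T₀.dsum T₁) := by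
  induction hN : T.m + T.n using Nat.strong_induction_on generalizing T with
  | _ N ih =>
    by_cases hsing : T.StrictlySingular star
    · exact ⟨empty F, T, strictlyRegular_empty, isEpsDeltaTriple_empty, hsing, hT,
        iso_empty_dsum T⟩
    obtain ⟨R, T₂, hR, hRm, hRT⟩ := exists_iso_regular_dsum_of_not_strictlySingular hsing
    obtain ⟨P, hP, hRP⟩ := hR.exists_iso_strictlyRegular
    obtain ⟨hRε, hT₂ε⟩ := isEpsDeltaTriple_dsum_iff.1 (hT.of_iso hε hδ hRT)
    have hsize : T₂.m + T₂.n < N := by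
      have hm := hRT.m_eq
      have hn := hRT.n_eq
      simp only [MTriple.dsum] at hm hn
      omega
    obtain ⟨T₀, T₁, h₀, h₀ε, h₁, h₁ε, hT₂⟩ := ih _ hsize T₂ hT₂ε rfl
    exact ⟨P.dsum T₀, T₁, hP.dsum h₀, isEpsDeltaTriple_dsum_iff.2 ⟨hRε.of_iso hε hδ hRP, h₀ε⟩, h₁,
      h₁ε, (hRT.trans (hRP.dsum hT₂)).trans (iso_dsum_assoc P T₀ T₁)⟩

end MTriple

theorem stmt2_general {F : Type*} [DivisionRing F] (inv : F → F)
    (hadd : ∀ a b : F, inv (a + b) = inv a + inv b)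
    (hmul : ∀ a b : F, inv (a * b) = inv b * inv a)
    (hinvol : ∀ a : F, inv (inv a) = a)
    (ε δ : F) (hε : ε = 1 ∨ ε = -1) (hδ : δ = 1 ∨ δ = -1)
    (T : MTriple F) (hB : adjM inv T.B = ε • T.B) (hC : adjM inv T.C = δ • T.C) :
    ∃ T₀ T₁ : MTriple F,
      T₀.StrictlyRegular ∧
      adjM inv T₀.B = ε • T₀.B ∧ adjM inv T₀.C = δ • T₀.C ∧
      T₁.StrictlySingular inv ∧
      adjM inv T₁.B = ε • T₁.B ∧ adjM inv T₁.C = δ • T₁.C ∧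
      T.Iso inv (T₀.dsum T₁) := by
  let _ : StarRing F :=
    { star := inv, star_involutive := hinvol, star_mul := hmul, star_add := hadd }
  obtain ⟨T₀, T₁, h₀, ⟨hB₀, hC₀⟩, h₁, ⟨hB₁, hC₁⟩, hT⟩ :=
    MTriple.exists_iso_strictlyRegular_dsum_strictlySingular hε hδ T ⟨hB, hC⟩
  exact ⟨T₀, T₁, h₀, hB₀, hC₀, h₁, hB₁, hC₁, hT⟩

/-- Every `(ε,δ)`-triple over a division ring `F` of characteristic not 2 with involution
`inv` (identity involution unless `ε = δ = 1`) is isomorphic to a direct sum of a strictly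
regular `(ε,δ)`-triple and a strictly singular `(ε,δ)`-triple. -/
theorem stmt2 {F : Type*} [DivisionRing F] (h2 : (2 : F) ≠ 0) (inv : F → F)
    (hadd : ∀ a b : F, inv (a + b) = inv a + inv b)
    (hmul : ∀ a b : F, inv (a * b) = inv b * inv a)
    (hinvol : ∀ a : F, inv (inv a) = a)
    (ε δ : F) (hε : ε = 1 ∨ ε = -1) (hδ : δ = 1 ∨ δ = -1)
    (hid : (∀ a : F, inv a = a) ∨ (ε = 1 ∧ δ = 1))
    (T : MTriple F) (hB : adjM inv T.B = ε • T.B) (hC : adjM inv T.C = δ • T.C) :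
    ∃ T₀ T₁ : MTriple F,
      T₀.StrictlyRegular ∧
      adjM inv T₀.B = ε • T₀.B ∧ adjM inv T₀.C = δ • T₀.C ∧
      T₁.StrictlySingular inv ∧
      adjM inv T₁.B = ε • T₁.B ∧ adjM inv T₁.C = δ • T₁.C ∧
      T.Iso inv (T₀.dsum T₁) :=
  stmt2_general inv hadd hmul hinvol ε δ hε hδ T hB hC
end

section
/- Let F be a division ring with 1+1 ≠ 0, let r ≥ 1 be odd, and let δ ∈ {1,−1}. Suppose R₁, S₁ ∈ M_r(F) and R₂, S₂ ∈ M_{r−1}(F) satisfy the four intertwining relations F_r R₁ = R₂ F_r, S₁ F_rᵀ = F_rᵀ S₂, S₁ Z_r = Z_r R₁, and S₂ Z_{r−1,δ} = Z_{r−1,δ} R₂. Then there exists a ∈ F such that R₁ and R₂ are lower triangular with every diagonal entry equal to a, and S₁ and S₂ are upper triangular with every diagonal entry equal to a. -/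
open Matrix

/-- Endomorphisms of the self-dual quadruple `P = (F_r, F_rᵀ, Z_r, Z_{r-1,δ})` (with `r`
odd) are triangular with a constant scalar `a` on all four diagonals. -/
theorem stmt14 {F : Type*} [DivisionRing F] (h2 : (2 : F) ≠ 0)
    (r : ℕ) (hr : Odd r) (δ : F) (hδ : δ = 1 ∨ δ = -1)
    (R₁ S₁ : Matrix (Fin r) (Fin r) F) (R₂ S₂ : Matrix (Fin (r - 1)) (Fin (r - 1)) F)
    (e₁ : Fm F r * R₁ = R₂ * Fm F r)
    (e₂ : S₁ * (Fm F r)ᵀ = (Fm F r)ᵀ * S₂)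
    (e₃ : S₁ * Zm F r = Zm F r * R₁)
    (e₄ : S₂ * ZmS (r - 1) δ = ZmS (r - 1) δ * R₂) :
    ∃ a : F,
      (∀ i j : Fin r, (i : ℕ) < (j : ℕ) → R₁ i j = 0) ∧
      (∀ i : Fin r, R₁ i i = a) ∧
      (∀ i j : Fin (r - 1), (i : ℕ) < (j : ℕ) → R₂ i j = 0) ∧
      (∀ i : Fin (r - 1), R₂ i i = a) ∧
      (∀ i j : Fin r, (j : ℕ) < (i : ℕ) → S₁ i j = 0) ∧
      (∀ i : Fin r, S₁ i i = a) ∧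
      (∀ i j : Fin (r - 1), (j : ℕ) < (i : ℕ) → S₂ i j = 0) ∧
      (∀ i : Fin (r - 1), S₂ i i = a) := by
  have h0r : 0 < r := hr.pos
  have hm : r - 1 < r := Nat.sub_lt h0r one_pos
  -- ℕ-indexed version of R₁
  set Rf : ℕ → ℕ → F := fun a b =>
    if h : a < r ∧ b < r then R₁ ⟨a, h.1⟩ ⟨b, h.2⟩ else 0 with hRfdef
  have hRf : ∀ (a b : ℕ) (ha : a < r) (hb : b < r), Rf a b = R₁ ⟨a, ha⟩ ⟨b, hb⟩ := by
    intro a b ha hb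
    simp only [hRfdef]
    rw [dif_pos ⟨ha, hb⟩]
  -- the local epsilon function facts
  have hεopt : ∀ k : ℕ, (if k < (r-1)/2 then δ else 1) = 1 ∨
      (if k < (r-1)/2 then δ else 1) = -1 := by
    intro k
    by_cases c : k < (r-1)/2 <;> rcases hδ with h | h <;> simp [c, h]
  have hεne : ∀ k : ℕ, (if k < (r-1)/2 then δ else (1:F)) ≠ 0 := by
    intro k
    rcases hεopt k with h | h <;> rw [h] <;> simp
  -- pointwise consequence of e₁ : R₂ entries are entries of R₁
  have hR₂ : ∀ (i j : ℕ) (hi : i < r - 1) (hj : j < r - 1),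
      R₂ ⟨i, hi⟩ ⟨j, hj⟩ = Rf i j := by
    intro i j hi hj
    have hir : i < r := by omega
    have hjr : j < r := by omega
    have h := Matrix.ext_iff.mpr e₁ ⟨i, hi⟩ ⟨j, hjr⟩
    rw [Matrix.mul_apply, Matrix.mul_apply] at h
    have hl : ∑ k, Fm F r ⟨i, hi⟩ k * R₁ k ⟨j, hjr⟩ = R₁ ⟨i, hir⟩ ⟨j, hjr⟩ := by
      rw [Finset.sum_eq_single (⟨i, hir⟩ : Fin r)]
      · simp [Fm]
      · intro k _ hk
        have hne : i ≠ (k : ℕ) := fun hik => hk (Fin.ext hik.symm)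
        simp [Fm, hne]
      · simp
    have hrr : ∑ k, R₂ ⟨i, hi⟩ k * Fm F r k ⟨j, hjr⟩ = R₂ ⟨i, hi⟩ ⟨j, hj⟩ := by
      rw [Finset.sum_eq_single (⟨j, hj⟩ : Fin (r-1))]
      · simp [Fm]
      · intro k _ hk
        have hne : (k : ℕ) ≠ j := fun hkj => hk (Fin.ext hkj)
        simp [Fm, hne]
      · simp
    rw [hl, hrr] at h
    rw [hRf i j hir hjr]
    exact h.symm
  -- pointwise consequence of e₃ : S₁ is the double-reversal of R₁
  have hS₁ : ∀ (i j : ℕ) (hi : i < r) (hj : j < r),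
      S₁ ⟨i, hi⟩ ⟨j, hj⟩ = Rf (r-1-i) (r-1-j) := by
    intro i j hi hj
    have hj' : r - 1 - j < r := by omega
    have hi' : r - 1 - i < r := by omega
    have h := Matrix.ext_iff.mpr e₃ ⟨i, hi⟩ ⟨r-1-j, hj'⟩
    rw [Matrix.mul_apply, Matrix.mul_apply] at h
    have hl : ∑ k, S₁ ⟨i, hi⟩ k * Zm F r k ⟨r-1-j, hj'⟩ = S₁ ⟨i, hi⟩ ⟨j, hj⟩ := by
      rw [Finset.sum_eq_single (⟨j, hj⟩ : Fin r)]
      · simp only [Zm, Matrix.of_apply]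
        rw [if_pos (by omega), mul_one]
      · intro k _ hk
        simp only [Zm, Matrix.of_apply]
        rw [if_neg, mul_zero]
        intro hc
        have hc' : (k:ℕ) + (r-1-j) = r-1 := hc
        exact hk (Fin.ext (show (k:ℕ) = j by omega))
      · simp
    have hrr : ∑ k, Zm F r ⟨i, hi⟩ k * R₁ k ⟨r-1-j, hj'⟩
        = R₁ ⟨r-1-i, hi'⟩ ⟨r-1-j, hj'⟩ := by
      rw [Finset.sum_eq_single (⟨r-1-i, hi'⟩ : Fin r)]
      · simp only [Zm, Matrix.of_apply]
        rw [if_pos (by omega), one_mul]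
      · intro k _ hk
        simp only [Zm, Matrix.of_apply]
        rw [if_neg, zero_mul]
        intro hc
        have hc' : i + (k:ℕ) = r-1 := hc
        exact hk (Fin.ext (show (k:ℕ) = r-1-i by omega))
      · simp
    rw [hl, hrr] at h
    rw [hRf _ _ hi' hj']
    exact h
  -- pointwise consequence of e₂ : S₂ entries are entries of S₁, last row of S₁ vanishing
  have hS₂S₁ : ∀ (i j : ℕ) (hi : i < r - 1) (hj : j < r - 1),
      S₂ ⟨i, hi⟩ ⟨j, hj⟩ = S₁ ⟨i, by omega⟩ ⟨j, by omega⟩ := by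
    intro i j hi hj
    have hir : i < r := by omega
    have hjr : j < r := by omega
    have h := Matrix.ext_iff.mpr e₂ ⟨i, hir⟩ ⟨j, hj⟩
    rw [Matrix.mul_apply, Matrix.mul_apply] at h
    have hl : ∑ k, S₁ ⟨i, hir⟩ k * (Fm F r)ᵀ k ⟨j, hj⟩ = S₁ ⟨i, hir⟩ ⟨j, hjr⟩ := by
      rw [Finset.sum_eq_single (⟨j, hjr⟩ : Fin r)]
      · simp [Fm, Matrix.transpose_apply]
      · intro k _ hk
        have hne : j ≠ (k : ℕ) := fun hkj => hk (Fin.ext hkj.symm)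
        simp [Fm, Matrix.transpose_apply, hne]
      · simp
    have hrr : ∑ k, (Fm F r)ᵀ ⟨i, hir⟩ k * S₂ k ⟨j, hj⟩ = S₂ ⟨i, hi⟩ ⟨j, hj⟩ := by
      rw [Finset.sum_eq_single (⟨i, hi⟩ : Fin (r-1))]
      · simp [Fm, Matrix.transpose_apply]
      · intro k _ hk
        have hne : (k : ℕ) ≠ i := fun hkj => hk (Fin.ext hkj)
        simp [Fm, Matrix.transpose_apply, hne]
      · simp
    rw [hl, hrr] at h
    exact h.symm
  have hlastrow : ∀ (j : ℕ) (hj : j < r - 1),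
      S₁ ⟨r-1, hm⟩ ⟨j, by omega⟩ = 0 := by
    intro j hj
    have hjr : j < r := by omega
    have h := Matrix.ext_iff.mpr e₂ ⟨r-1, hm⟩ ⟨j, hj⟩
    rw [Matrix.mul_apply, Matrix.mul_apply] at h
    have hl : ∑ k, S₁ ⟨r-1, hm⟩ k * (Fm F r)ᵀ k ⟨j, hj⟩ = S₁ ⟨r-1, hm⟩ ⟨j, hjr⟩ := by
      rw [Finset.sum_eq_single (⟨j, hjr⟩ : Fin r)]
      · simp [Fm, Matrix.transpose_apply]
      · intro k _ hk
        have hne : j ≠ (k : ℕ) := fun hkj => hk (Fin.ext hkj.symm)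
        simp [Fm, Matrix.transpose_apply, hne]
      · simp
    have hrr : ∑ k, (Fm F r)ᵀ ⟨r-1, hm⟩ k * S₂ k ⟨j, hj⟩ = 0 := by
      apply Finset.sum_eq_zero
      intro k _
      have hne : (k : ℕ) ≠ r - 1 := by have := k.isLt; omega
      simp [Fm, Matrix.transpose_apply, hne]
    rw [hl, hrr] at h
    exact h
  -- S₂ entries as entries of Rf
  have hS₂ : ∀ (i j : ℕ) (hi : i < r - 1) (hj : j < r - 1),
      S₂ ⟨i, hi⟩ ⟨j, hj⟩ = Rf (r-1-i) (r-1-j) := by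
    intro i j hi hj
    rw [hS₂S₁ i j hi hj, hS₁ i j (by omega) (by omega)]
  -- base : first row of R₁ vanishes off the corner
  have base : ∀ (b : ℕ), 0 < b → b < r → Rf 0 b = 0 := by
    intro b hb hbr
    have h1 := hlastrow (r-1-b) (by omega)
    have h2 := hS₁ (r-1) (r-1-b) hm (by omega)
    rw [show r-1-(r-1) = 0 by omega, show r-1-(r-1-b) = b by omega] at h2
    rw [← h2]
    exact h1
  -- pointwise consequence of e₄, expressed through Rf
  have hD : ∀ (i j : ℕ) (hi : i < r - 1) (hj : j < r - 1),
      Rf (r-1-i) (r-1-j) * (if j < (r-1)/2 then δ else 1)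
        = (if i < (r-1)/2 then δ else 1) * Rf (r-1-1-i) (r-1-1-j) := by
    intro i j hi hj
    have hj' : r - 1 - 1 - j < r - 1 := by omega
    have hi' : r - 1 - 1 - i < r - 1 := by omega
    have h := Matrix.ext_iff.mpr e₄ ⟨i, hi⟩ ⟨r-1-1-j, hj'⟩
    rw [Matrix.mul_apply, Matrix.mul_apply] at h
    have hl : ∑ k, S₂ ⟨i, hi⟩ k * ZmS (r-1) δ k ⟨r-1-1-j, hj'⟩
        = S₂ ⟨i, hi⟩ ⟨j, hj⟩ * (if j < (r-1)/2 then δ else 1) := by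
      rw [Finset.sum_eq_single (⟨j, hj⟩ : Fin (r-1))]
      · simp only [ZmS, Matrix.of_apply]
        rw [if_pos (by omega)]
      · intro k _ hk
        simp only [ZmS, Matrix.of_apply]
        rw [if_neg, mul_zero]
        intro hc
        have hc' : (k:ℕ) + (r-1-1-j) = r-1-1 := hc
        exact hk (Fin.ext (show (k:ℕ) = j by omega))
      · simp
    have hrr : ∑ k, ZmS (r-1) δ ⟨i, hi⟩ k * R₂ k ⟨r-1-1-j, hj'⟩
        = (if i < (r-1)/2 then δ else 1) * R₂ ⟨r-1-1-i, hi'⟩ ⟨r-1-1-j, hj'⟩ := by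
      rw [Finset.sum_eq_single (⟨r-1-1-i, hi'⟩ : Fin (r-1))]
      · simp only [ZmS, Matrix.of_apply]
        rw [if_pos (by omega)]
      · intro k _ hk
        simp only [ZmS, Matrix.of_apply]
        rw [if_neg, zero_mul]
        intro hc
        have hc' : i + (k:ℕ) = r-1-1 := hc
        exact hk (Fin.ext (show (k:ℕ) = r-1-1-i by omega))
      · simp
    rw [hl, hrr, hS₂ i j hi hj, hR₂ _ _ hi' hj'] at h
    exact h
  -- the descent recurrence
  have hK : ∀ a b : ℕ, 0 < a → a < r → 0 < b → b < r →
      Rf a b * (if r-1-b < (r-1)/2 then δ else 1)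
        = (if r-1-a < (r-1)/2 then δ else 1) * Rf (a-1) (b-1) := by
    intro a b ha har hb hbr
    have h := hD (r-1-a) (r-1-b) (by omega) (by omega)
    rw [show r-1-(r-1-a) = a by omega, show r-1-(r-1-b) = b by omega,
      show r-1-1-(r-1-a) = a-1 by omega, show r-1-1-(r-1-b) = b-1 by omega] at h
    exact h
  -- strict upper triangularity of Rf
  have T1 : ∀ n a b : ℕ, a = n → a < b → b < r → Rf a b = 0 := by
    intro n
    induction n with
    | zero =>
      intro a b ha hab hbr
      subst ha
      exact base b hab hbr
    | succ t ih =>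
      intro a b ha hab hbr
      have h := hK a b (by omega) (by omega) (by omega) hbr
      rw [ih (a-1) (b-1) (by omega) (by omega) (by omega), mul_zero] at h
      exact (mul_eq_zero.mp h).resolve_right (hεne _)
  -- constancy of the diagonal of Rf
  have T2 : ∀ n a : ℕ, a = n → a < r → Rf a a = Rf 0 0 := by
    intro n
    induction n with
    | zero =>
      intro a ha _
      subst ha
      rfl
    | succ t ih =>
      intro a ha har
      have h := hK a a (by omega) har (by omega) har
      rw [ih (a-1) (by omega) (by omega)] at h
      rcases hεopt (r-1-a) with he | he
      · rw [he, mul_one, one_mul] at h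
        exact h
      · rw [he, mul_neg_one, neg_one_mul] at h
        exact neg_injective h
  refine ⟨Rf 0 0, ?_, ?_, ?_, ?_, ?_, ?_, ?_, ?_⟩
  · intro i j hij
    have h : R₁ i j = Rf i.1 j.1 := (hRf i.1 j.1 i.isLt j.isLt).symm
    rw [h]
    exact T1 i.1 i.1 j.1 rfl hij j.isLt
  · intro i
    have h : R₁ i i = Rf i.1 i.1 := (hRf i.1 i.1 i.isLt i.isLt).symm
    rw [h]
    exact T2 i.1 i.1 rfl i.isLt
  · intro i j hij
    have h : R₂ i j = Rf i.1 j.1 := hR₂ i.1 j.1 i.isLt j.isLt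
    rw [h]
    exact T1 i.1 i.1 j.1 rfl hij (by have := j.isLt; omega)
  · intro i
    have h : R₂ i i = Rf i.1 i.1 := hR₂ i.1 i.1 i.isLt i.isLt
    rw [h]
    exact T2 i.1 i.1 rfl (by have := i.isLt; omega)
  · intro i j hij
    have h : S₁ i j = Rf (r-1-i.1) (r-1-j.1) := hS₁ i.1 j.1 i.isLt j.isLt
    rw [h]
    exact T1 (r-1-i.1) (r-1-i.1) (r-1-j.1) rfl (by have := i.isLt; omega) (by omega)
  · intro i
    have h : S₁ i i = Rf (r-1-i.1) (r-1-i.1) := hS₁ i.1 i.1 i.isLt i.isLt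
    rw [h]
    exact T2 (r-1-i.1) (r-1-i.1) rfl (by omega)
  · intro i j hij
    have h : S₂ i j = Rf (r-1-i.1) (r-1-j.1) := hS₂ i.1 j.1 i.isLt j.isLt
    rw [h]
    have hi := i.isLt
    have hj := j.isLt
    exact T1 (r-1-i.1) (r-1-i.1) (r-1-j.1) rfl (by omega) (by omega)
  · intro i
    have h : S₂ i i = Rf (r-1-i.1) (r-1-i.1) := hS₂ i.1 i.1 i.isLt i.isLt
    rw [h]
    exact T2 (r-1-i.1) (r-1-i.1) rfl (by omega)
end

section
/- Let F be a division ring with 1+1 ≠ 0, let r ≥ 1 be odd, and let δ ∈ {1,−1}. Call a tuple (R₁, R₂, S₁, S₂) with R₁, S₁ ∈ M_r(F), R₂, S₂ ∈ M_{r−1}(F) an endomorphism of P if F_r R₁ = R₂ F_r, S₁ F_rᵀ = F_rᵀ S₂, S₁ Z_r = Z_r R₁, and S₂ Z_{r−1,δ} = Z_{r−1,δ} R₂. Then: (1) an endomorphism (R₁, R₂, S₁, S₂) has all four matrices invertible if and only if the common diagonal entry a of R₁ (equivalently, of R₂, S₁, S₂) is nonzero; (2) the set of non-invertible endomorphisms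 is closed under componentwise addition; consequently the endomorphism ring of P = (F_r, F_rᵀ, Z_r, Z_{r−1,δ}) is a local ring whose non-invertible elements form the maximal ideal. -/
open Matrix

/-- The defining relations of an endomorphism `(R₁, R₂, S₁, S₂)` of the self-dual
quadruple `P = (F_r, F_rᵀ, Z_r, Z_{r-1,δ})`. -/
def IsEndoP {F : Type*} [DivisionRing F] (r : ℕ) (δ : F)
    (R₁ S₁ : Matrix (Fin r) (Fin r) F) (R₂ S₂ : Matrix (Fin (r - 1)) (Fin (r - 1)) F) :
    Prop :=
  Fm F r * R₁ = R₂ * Fm F r ∧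
  S₁ * (Fm F r)ᵀ = (Fm F r)ᵀ * S₂ ∧
  S₁ * Zm F r = Zm F r * R₁ ∧
  S₂ * ZmS (r - 1) δ = ZmS (r - 1) δ * R₂


section Aux
variable {F : Type*} [DivisionRing F]

def embF (r : ℕ) : Fin (r-1) → Fin r := Fin.castLE (Nat.sub_le r 1)

@[simp] lemma embF_val (r : ℕ) (i : Fin (r-1)) : ((embF r i : Fin r) : ℕ) = (i : ℕ) := rfl

def cs {r : ℕ} (k : Fin (r-1)) : Fin r := ⟨(k : ℕ) + 1, by have := k.isLt; omega⟩

@[simp] lemma cs_val {r : ℕ} (k : Fin (r-1)) : ((cs k : Fin r) : ℕ) = (k : ℕ) + 1 := rfl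

lemma sum_single_left {n : ℕ} {w f : Fin n → F} (c : Fin n)
    (h0 : ∀ b : Fin n, b ≠ c → w b = 0) :
    ∑ k, w k * f k = w c * f c :=
  Fintype.sum_eq_single c fun b hb => by rw [h0 b hb, zero_mul]

lemma sum_single_right {n : ℕ} {w f : Fin n → F} (c : Fin n)
    (h0 : ∀ b : Fin n, b ≠ c → w b = 0) :
    ∑ k, f k * w k = f c * w c :=
  Fintype.sum_eq_single c fun b hb => by rw [h0 b hb, mul_zero]

lemma pow_eq_zero_strictLower {n : ℕ} (M : Matrix (Fin n) (Fin n) F)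
    (h : ∀ i j : Fin n, (i : ℕ) ≤ (j : ℕ) → M i j = 0) : M ^ n = 0 := by
  have key : ∀ k : ℕ, ∀ i j : Fin n, (i : ℕ) < (j : ℕ) + k → (M ^ k) i j = 0 := by
    intro k
    induction k with
    | zero =>
      intro i j hij
      rw [pow_zero]
      exact Matrix.one_apply_ne (by rintro rfl; omega)
    | succ k ih =>
      intro i j hij
      rw [pow_succ, Matrix.mul_apply]
      apply Finset.sum_eq_zero
      intro l _
      by_cases hl : (i : ℕ) < (l : ℕ) + k
      · rw [ih i l hl, zero_mul]
      · rw [h l j (by omega), mul_zero]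
  ext i j
  rw [key n i j (by have := i.isLt; omega)]
  simp

lemma pow_eq_zero_strictUpper {n : ℕ} (M : Matrix (Fin n) (Fin n) F)
    (h : ∀ i j : Fin n, (j : ℕ) ≤ (i : ℕ) → M i j = 0) : M ^ n = 0 := by
  have key : ∀ k : ℕ, ∀ i j : Fin n, (j : ℕ) < (i : ℕ) + k → (M ^ k) i j = 0 := by
    intro k
    induction k with
    | zero =>
      intro i j hij
      rw [pow_zero]
      exact Matrix.one_apply_ne (by rintro rfl; omega)
    | succ k ih =>
      intro i j hij
      rw [pow_succ, Matrix.mul_apply]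
      apply Finset.sum_eq_zero
      intro l _
      by_cases hl : (l : ℕ) < (i : ℕ) + k
      · rw [ih i l hl, zero_mul]
      · rw [h l j (by omega), mul_zero]
  ext i j
  rw [key n i j (by have := j.isLt; omega)]
  simp

lemma isUnit_lowerTri {n : ℕ} (M : Matrix (Fin n) (Fin n) F)
    (htri : ∀ i j : Fin n, (i : ℕ) < (j : ℕ) → M i j = 0)
    (hdiag : ∀ i, M i i ≠ 0) : IsUnit M := by
  set E : Matrix (Fin n) (Fin n) F := Matrix.diagonal (fun i => (M i i)⁻¹) with hE
  set D : Matrix (Fin n) (Fin n) F := Matrix.diagonal (fun i => M i i) with hD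
  have hDE : D * E = 1 := by
    rw [hD, hE, Matrix.diagonal_mul_diagonal]
    have : (fun i => M i i * (M i i)⁻¹) = fun _ : Fin n => (1 : F) :=
      funext fun i => mul_inv_cancel₀ (hdiag i)
    rw [this, Matrix.diagonal_one]
  have hED : E * D = 1 := by
    rw [hD, hE, Matrix.diagonal_mul_diagonal]
    have : (fun i => (M i i)⁻¹ * M i i) = fun _ : Fin n => (1 : F) :=
      funext fun i => inv_mul_cancel₀ (hdiag i)
    rw [this, Matrix.diagonal_one]
  have hDu : IsUnit D := ⟨⟨D, E, hDE, hED⟩, rfl⟩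
  have hL : ∀ i j : Fin n, (i : ℕ) ≤ (j : ℕ) → (E * M - 1) i j = 0 := by
    intro i j hij
    simp only [Matrix.sub_apply, hE, Matrix.diagonal_mul]
    rcases eq_or_lt_of_le hij with he | hlt
    · have hij' : i = j := Fin.ext he
      subst hij'
      rw [inv_mul_cancel₀ (hdiag i), Matrix.one_apply_eq, sub_self]
    · rw [htri i j hlt, mul_zero, Matrix.one_apply_ne (by rintro rfl; omega), sub_zero]
  have hnil : IsNilpotent (E * M - 1) := ⟨n, pow_eq_zero_strictLower _ hL⟩
  have hu1 : IsUnit (E * M) := by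
    have := (hnil.isUnit_one_add)
    rwa [add_sub_cancel] at this
  have hM : M = D * (E * M) := by rw [← mul_assoc, hDE, one_mul]
  rw [hM]
  exact hDu.mul hu1

lemma isUnit_upperTri {n : ℕ} (M : Matrix (Fin n) (Fin n) F)
    (htri : ∀ i j : Fin n, (j : ℕ) < (i : ℕ) → M i j = 0)
    (hdiag : ∀ i, M i i ≠ 0) : IsUnit M := by
  set E : Matrix (Fin n) (Fin n) F := Matrix.diagonal (fun i => (M i i)⁻¹) with hE
  set D : Matrix (Fin n) (Fin n) F := Matrix.diagonal (fun i => M i i) with hD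
  have hDE : D * E = 1 := by
    rw [hD, hE, Matrix.diagonal_mul_diagonal]
    have : (fun i => M i i * (M i i)⁻¹) = fun _ : Fin n => (1 : F) :=
      funext fun i => mul_inv_cancel₀ (hdiag i)
    rw [this, Matrix.diagonal_one]
  have hED : E * D = 1 := by
    rw [hD, hE, Matrix.diagonal_mul_diagonal]
    have : (fun i => (M i i)⁻¹ * M i i) = fun _ : Fin n => (1 : F) :=
      funext fun i => inv_mul_cancel₀ (hdiag i)
    rw [this, Matrix.diagonal_one]
  have hDu : IsUnit D := ⟨⟨D, E, hDE, hED⟩, rfl⟩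
  have hL : ∀ i j : Fin n, (j : ℕ) ≤ (i : ℕ) → (M * E - 1) i j = 0 := by
    intro i j hij
    simp only [Matrix.sub_apply, hE, Matrix.mul_diagonal]
    rcases eq_or_lt_of_le hij with he | hlt
    · have hij' : j = i := Fin.ext he
      subst hij'
      rw [mul_inv_cancel₀ (hdiag j), Matrix.one_apply_eq, sub_self]
    · rw [htri i j hlt, zero_mul, Matrix.one_apply_ne (by rintro rfl; omega), sub_zero]
  have hnil : IsNilpotent (M * E - 1) := ⟨n, pow_eq_zero_strictUpper _ hL⟩
  have hu1 : IsUnit (M * E) := by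
    have := (hnil.isUnit_one_add)
    rwa [add_sub_cancel] at this
  have hM : M = (M * E) * D := by rw [mul_assoc, hED, mul_one]
  rw [hM]
  exact hu1.mul hDu

lemma not_isUnit_row_zero {n : ℕ} (M : Matrix (Fin n) (Fin n) F) (i₀ : Fin n)
    (h : ∀ j, M i₀ j = 0) : ¬ IsUnit M := by
  intro hu
  obtain ⟨B, hB⟩ := hu.exists_right_inv
  have h2 := congrFun (congrFun hB i₀) i₀
  rw [Matrix.mul_apply] at h2
  simp only [h, zero_mul, Finset.sum_const_zero, Matrix.one_apply_eq] at h2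
  exact zero_ne_one h2

lemma Fm_last_col {r : ℕ} (b : Fin (r-1)) (c : Fin r) (hc : (c : ℕ) = r - 1) :
    Fm F r b c = 0 := by
  have hb := b.isLt
  simp only [Fm, Matrix.of_apply]
  rw [if_neg (show ¬((b : ℕ) = (c : ℕ)) by omega)]

lemma endo_struct {r : ℕ} (hrpos : 0 < r) {δ : F} (hδ : δ = 1 ∨ δ = -1)
    {R₁ S₁ : Matrix (Fin r) (Fin r) F} {R₂ S₂ : Matrix (Fin (r-1)) (Fin (r-1)) F}
    (hE : IsEndoP r δ R₁ S₁ R₂ S₂) :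
    (∀ i j : Fin r, (i : ℕ) < (j : ℕ) → R₁ i j = 0) ∧
    (∀ i : Fin r, R₁ i i = R₁ ⟨0, hrpos⟩ ⟨0, hrpos⟩) ∧
    (∀ i j : Fin (r-1), R₂ i j = R₁ (embF r i) (embF r j)) ∧
    (∀ i j : Fin r, S₁ i j = R₁ i.rev j.rev) ∧
    (∀ i j : Fin (r-1), S₂ i j = S₁ (embF r i) (embF r j)) := by
  obtain ⟨h1, h2, h3, h4⟩ := hE
  set εf : Fin (r-1) → F := fun k => if (k : ℕ) < (r-1)/2 then δ else 1 with hεf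
  have hε2 : ∀ k, εf k * εf k = 1 := by
    intro k
    rw [hεf]
    rcases hδ with h | h <;> subst h <;> by_cases hk : (k : ℕ) < (r-1)/2 <;> simp [hk]
  have hεc : ∀ (k : Fin (r-1)) (x : F), εf k * x = x * εf k := by
    intro k x
    rw [hεf]
    rcases hδ with h | h <;> subst h <;> by_cases hk : (k : ℕ) < (r-1)/2 <;>
      simp [hk, neg_one_mul, mul_neg_one]
  -- indicator facts
  have hFmrow : ∀ (i : Fin (r-1)) (b : Fin r), b ≠ embF r i → Fm F r i b = 0 := by
    intro i b hb
    simp only [Fm, Matrix.of_apply]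
    rw [if_neg]
    exact fun hv => hb (Fin.ext hv.symm)
  have hFmone : ∀ i : Fin (r-1), Fm F r i (embF r i) = 1 := by
    intro i; simp [Fm]
  -- extraction from relation 1
  have E1a : ∀ i j : Fin (r-1), R₂ i j = R₁ (embF r i) (embF r j) := by
    intro i j
    have hh := congrFun (congrFun h1 i) (embF r j)
    rw [Matrix.mul_apply, Matrix.mul_apply] at hh
    have hL : (∑ k, Fm F r i k * R₁ k (embF r j))
        = Fm F r i (embF r i) * R₁ (embF r i) (embF r j) :=
      sum_single_left _ (fun b hb => hFmrow i b hb)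
    have hR : (∑ k, R₂ i k * Fm F r k (embF r j)) = R₂ i j * Fm F r j (embF r j) :=
      sum_single_right _ (fun b hb => by
        simp only [Fm, Matrix.of_apply]
        rw [if_neg]
        exact fun hv => hb (Fin.ext (by simpa using hv)))
    rw [hL, hR, hFmone i, hFmone j, one_mul, mul_one] at hh
    exact hh.symm
  have E1b : ∀ i : Fin (r-1), R₁ (embF r i) ⟨r-1, by omega⟩ = 0 := by
    intro i
    have hh := congrFun (congrFun h1 i) ⟨r-1, by omega⟩
    rw [Matrix.mul_apply, Matrix.mul_apply] at hh
    have hL : (∑ k, Fm F r i k * R₁ k ⟨r-1, by omega⟩)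
        = Fm F r i (embF r i) * R₁ (embF r i) ⟨r-1, by omega⟩ :=
      sum_single_left _ (fun b hb => hFmrow i b hb)
    have hR : (∑ k, R₂ i k * Fm F r k ⟨r-1, by omega⟩) = 0 :=
      Finset.sum_eq_zero (fun b _ => by
        rw [Fm_last_col b ⟨r-1, by omega⟩ rfl, mul_zero])
    rw [hL, hR, hFmone i, one_mul] at hh
    exact hh
  -- extraction from relation 3
  have hZcol : ∀ (j b : Fin r), b ≠ j.rev → Zm F r b j = 0 := by
    intro j b hb
    simp only [Zm, Matrix.of_apply]
    rw [if_neg]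
    intro hv
    exact hb (Fin.ext (by rw [Fin.val_rev]; have := j.isLt; have := b.isLt; omega))
  have hZrow : ∀ (i b : Fin r), b ≠ i.rev → Zm F r i b = 0 := by
    intro i b hb
    simp only [Zm, Matrix.of_apply]
    rw [if_neg]
    intro hv
    exact hb (Fin.ext (by rw [Fin.val_rev]; have := i.isLt; have := b.isLt; omega))
  have hZone : ∀ j : Fin r, Zm F r j.rev j = 1 := by
    intro j
    simp only [Zm, Matrix.of_apply]
    rw [if_pos (by rw [Fin.val_rev]; have := j.isLt; omega)]
  have hZone' : ∀ i : Fin r, Zm F r i i.rev = 1 := by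
    intro i
    simp only [Zm, Matrix.of_apply]
    rw [if_pos (by rw [Fin.val_rev]; have := i.isLt; omega)]
  have E3 : ∀ i j : Fin r, S₁ i j = R₁ i.rev j.rev := by
    have raw : ∀ i j : Fin r, S₁ i j.rev = R₁ i.rev j := by
      intro i j
      have hh := congrFun (congrFun h3 i) j
      rw [Matrix.mul_apply, Matrix.mul_apply] at hh
      have hL : (∑ k, S₁ i k * Zm F r k j) = S₁ i j.rev * Zm F r j.rev j :=
        sum_single_right _ (fun b hb => hZcol j b hb)
      have hR : (∑ k, Zm F r i k * R₁ k j) = Zm F r i i.rev * R₁ i.rev j :=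
        sum_single_left _ (fun b hb => hZrow i b hb)
      rw [hL, hR, hZone j, hZone' i, mul_one, one_mul] at hh
      exact hh
    intro i j
    have := raw i j.rev
    rwa [Fin.rev_rev] at this
  -- extraction from relation 2
  have E2a : ∀ i j : Fin (r-1), S₂ i j = S₁ (embF r i) (embF r j) := by
    intro i j
    have hh := congrFun (congrFun h2 (embF r i)) j
    rw [Matrix.mul_apply, Matrix.mul_apply] at hh
    have hL : (∑ k, S₁ (embF r i) k * (Fm F r)ᵀ k j)
        = S₁ (embF r i) (embF r j) * (Fm F r)ᵀ (embF r j) j :=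
      sum_single_right _ (fun b hb => by
        rw [Matrix.transpose_apply]
        exact hFmrow j b hb)
    have hR : (∑ k, (Fm F r)ᵀ (embF r i) k * S₂ k j)
        = (Fm F r)ᵀ (embF r i) i * S₂ i j :=
      sum_single_left _ (fun b hb => by
        rw [Matrix.transpose_apply]
        simp only [Fm, Matrix.of_apply]
        rw [if_neg]
        exact fun hv => hb (Fin.ext (by simpa using hv)))
    rw [hL, hR, Matrix.transpose_apply, Matrix.transpose_apply, hFmone i, hFmone j,
      one_mul, mul_one] at hh
    exact hh.symm
  have E2b : ∀ j : Fin (r-1), S₁ ⟨r-1, by omega⟩ (embF r j) = 0 := by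
    intro j
    have hh := congrFun (congrFun h2 ⟨r-1, by omega⟩) j
    rw [Matrix.mul_apply, Matrix.mul_apply] at hh
    have hL : (∑ k, S₁ ⟨r-1, by omega⟩ k * (Fm F r)ᵀ k j)
        = S₁ ⟨r-1, by omega⟩ (embF r j) * (Fm F r)ᵀ (embF r j) j :=
      sum_single_right _ (fun b hb => by
        rw [Matrix.transpose_apply]
        exact hFmrow j b hb)
    have hR : (∑ k, (Fm F r)ᵀ (⟨r-1, by omega⟩ : Fin r) k * S₂ k j) = 0 :=
      Finset.sum_eq_zero (fun b _ => by
        rw [Matrix.transpose_apply, Fm_last_col b ⟨r-1, by omega⟩ rfl, zero_mul])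
    rw [hL, hR, Matrix.transpose_apply, hFmone j, mul_one] at hh
    exact hh
  -- extraction from relation 4
  have hZ'col : ∀ (j b : Fin (r-1)), b ≠ j.rev → ZmS (r-1) δ b j = 0 := by
    intro j b hb
    simp only [ZmS, Matrix.of_apply]
    rw [if_neg]
    intro hv
    exact hb (Fin.ext (by rw [Fin.val_rev]; have := j.isLt; have := b.isLt; omega))
  have hZ'row : ∀ (i b : Fin (r-1)), b ≠ i.rev → ZmS (r-1) δ i b = 0 := by
    intro i b hb
    simp only [ZmS, Matrix.of_apply]
    rw [if_neg]
    intro hv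
    exact hb (Fin.ext (by rw [Fin.val_rev]; have := i.isLt; have := b.isLt; omega))
  have hZ'v1 : ∀ j : Fin (r-1), ZmS (r-1) δ j.rev j = εf j.rev := by
    intro j
    simp only [ZmS, Matrix.of_apply, hεf]
    rw [if_pos (by rw [Fin.val_rev]; have := j.isLt; omega)]
  have hZ'v2 : ∀ i : Fin (r-1), ZmS (r-1) δ i i.rev = εf i := by
    intro i
    simp only [ZmS, Matrix.of_apply, hεf]
    rw [if_pos (by rw [Fin.val_rev]; have := i.isLt; omega)]
  have E4 : ∀ i j : Fin (r-1), S₂ i j * εf j = εf i * R₂ i.rev j.rev := by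
    have raw : ∀ i j : Fin (r-1), S₂ i j.rev * εf j.rev = εf i * R₂ i.rev j := by
      intro i j
      have hh := congrFun (congrFun h4 i) j
      rw [Matrix.mul_apply, Matrix.mul_apply] at hh
      have hL : (∑ k, S₂ i k * ZmS (r-1) δ k j) = S₂ i j.rev * ZmS (r-1) δ j.rev j :=
        sum_single_right _ (fun b hb => hZ'col j b hb)
      have hR : (∑ k, ZmS (r-1) δ i k * R₂ k j) = ZmS (r-1) δ i i.rev * R₂ i.rev j :=
        sum_single_left _ (fun b hb => hZ'row i b hb)
      rw [hL, hR, hZ'v1 j, hZ'v2 i] at hh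
      exact hh
    intro i j
    have := raw i j.rev
    rwa [Fin.rev_rev] at this
  -- master recursion
  have Erec : ∀ k l : Fin (r-1),
      R₁ (cs k) (cs l) = εf k.rev * R₁ (embF r k) (embF r l) * εf l.rev := by
    intro k l
    have hk : (cs k : Fin r).rev = embF r k.rev := by
      apply Fin.ext
      rw [Fin.val_rev, embF_val, Fin.val_rev, cs_val]
      have := k.isLt; omega
    have hl : (cs l : Fin r).rev = embF r l.rev := by
      apply Fin.ext
      rw [Fin.val_rev, embF_val, Fin.val_rev, cs_val]
      have := l.isLt; omega
    have step1 : R₁ (cs k) (cs l) = S₂ k.rev l.rev := by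
      have := E3 (cs k).rev (cs l).rev
      rw [Fin.rev_rev, Fin.rev_rev] at this
      rw [← this, hk, hl, E2a]
    have step2 : S₂ k.rev l.rev = εf k.rev * R₂ k l * εf l.rev := by
      have h4' := E4 k.rev l.rev
      rw [Fin.rev_rev, Fin.rev_rev] at h4'
      calc S₂ k.rev l.rev = S₂ k.rev l.rev * (εf l.rev * εf l.rev) := by
            rw [hε2, mul_one]
        _ = (S₂ k.rev l.rev * εf l.rev) * εf l.rev := by rw [mul_assoc]
        _ = (εf k.rev * R₂ k l) * εf l.rev := by rw [h4']
    rw [step1, step2, E1a]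
  -- first row
  have Erow0 : ∀ j : Fin r, 0 < (j : ℕ) → R₁ ⟨0, hrpos⟩ j = 0 := by
    intro j hj
    have hjlt := j.isLt
    have hj'lt : (j.rev : ℕ) < r - 1 := by rw [Fin.val_rev]; omega
    have key := E3 (⟨r-1, by omega⟩ : Fin r) j.rev
    have h0eq : (⟨r-1, by omega⟩ : Fin r).rev = ⟨0, hrpos⟩ := by
      apply Fin.ext
      rw [Fin.val_rev]
      show r - (r - 1 + 1) = 0
      omega
    rw [Fin.rev_rev, h0eq] at key
    rw [← key]
    exact E2b ⟨(j.rev : ℕ), hj'lt⟩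
  -- triangularity
  have Etri : ∀ d : ℕ, ∀ i j : Fin r, (i : ℕ) = d → (i : ℕ) < (j : ℕ) → R₁ i j = 0 := by
    intro d
    induction d with
    | zero =>
      intro i j h0 hlt
      have : i = ⟨0, hrpos⟩ := Fin.ext h0
      subst this
      exact Erow0 j (by omega)
    | succ d ih =>
      intro i j hd hlt
      have hjlt := j.isLt
      have hd1 : d < r - 1 := by omega
      have hj1 : (j : ℕ) - 1 < r - 1 := by omega
      have hkv : ((⟨d, hd1⟩ : Fin (r-1)) : ℕ) = d := rfl
      have hlv : ((⟨(j : ℕ) - 1, hj1⟩ : Fin (r-1)) : ℕ) = (j : ℕ) - 1 := rfl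
      have hi : i = cs ⟨d, hd1⟩ := Fin.ext (by rw [cs_val, hkv]; omega)
      have hj : j = cs ⟨(j : ℕ) - 1, hj1⟩ := Fin.ext (by rw [cs_val, hlv]; omega)
      rw [hi, hj, Erec _ _,
        ih (embF r ⟨d, hd1⟩) (embF r ⟨(j : ℕ) - 1, hj1⟩)
          (by rw [embF_val, hkv]) (by rw [embF_val, embF_val, hkv, hlv]; omega),
        mul_zero, zero_mul]
  -- diagonal
  have Ediag : ∀ i : Fin r, R₁ i i = R₁ ⟨0, hrpos⟩ ⟨0, hrpos⟩ := by
    have key : ∀ d : ℕ, ∀ i : Fin r, (i : ℕ) = d → R₁ i i = R₁ ⟨0, hrpos⟩ ⟨0, hrpos⟩ := by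
      intro d
      induction d with
      | zero =>
        intro i h0
        have : i = ⟨0, hrpos⟩ := Fin.ext h0
        rw [this]
      | succ d ih =>
        intro i hd
        have hilt := i.isLt
        have hd1 : d < r - 1 := by omega
        have hkv : ((⟨d, hd1⟩ : Fin (r-1)) : ℕ) = d := rfl
        have hi : i = cs ⟨d, hd1⟩ := Fin.ext (by rw [cs_val, hkv]; omega)
        rw [hi, Erec _ _, ih (embF r ⟨d, hd1⟩) (by rw [embF_val, hkv]), hεc,
          mul_assoc, hε2, mul_one]
    exact fun i => key (i : ℕ) i rfl
  exact ⟨fun i j h => Etri (i : ℕ) i j rfl h, Ediag, E1a, E3, E2a⟩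

end Aux

/-- (1) An endomorphism of `P = (F_r, F_rᵀ, Z_r, Z_{r-1,δ})` (`r` odd) has all four
matrices invertible iff its common diagonal entry `a = R₁ 0 0` is nonzero; (2) the
non-invertible endomorphisms are closed under componentwise addition — so the endomorphism
ring of `P` is local, with the non-invertible elements as its maximal ideal. -/
theorem stmt15 {F : Type*} [DivisionRing F] (h2 : (2 : F) ≠ 0)
    (r : ℕ) (hr : Odd r) (hrpos : 0 < r) (δ : F) (hδ : δ = 1 ∨ δ = -1) :
    (∀ (R₁ S₁ : Matrix (Fin r) (Fin r) F) (R₂ S₂ : Matrix (Fin (r - 1)) (Fin (r - 1)) F),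
      IsEndoP r δ R₁ S₁ R₂ S₂ →
      ((IsUnit R₁ ∧ IsUnit R₂ ∧ IsUnit S₁ ∧ IsUnit S₂) ↔
        R₁ ⟨0, hrpos⟩ ⟨0, hrpos⟩ ≠ 0)) ∧
    (∀ (R₁ S₁ : Matrix (Fin r) (Fin r) F) (R₂ S₂ : Matrix (Fin (r - 1)) (Fin (r - 1)) F)
       (R₁' S₁' : Matrix (Fin r) (Fin r) F)
       (R₂' S₂' : Matrix (Fin (r - 1)) (Fin (r - 1)) F),
      IsEndoP r δ R₁ S₁ R₂ S₂ → IsEndoP r δ R₁' S₁' R₂' S₂' →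
      ¬(IsUnit R₁ ∧ IsUnit R₂ ∧ IsUnit S₁ ∧ IsUnit S₂) →
      ¬(IsUnit R₁' ∧ IsUnit R₂' ∧ IsUnit S₁' ∧ IsUnit S₂') →
      ¬(IsUnit (R₁ + R₁') ∧ IsUnit (R₂ + R₂') ∧
        IsUnit (S₁ + S₁') ∧ IsUnit (S₂ + S₂'))) := by
  have part1 : ∀ (R₁ S₁ : Matrix (Fin r) (Fin r) F)
      (R₂ S₂ : Matrix (Fin (r - 1)) (Fin (r - 1)) F),
      IsEndoP r δ R₁ S₁ R₂ S₂ →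
      ((IsUnit R₁ ∧ IsUnit R₂ ∧ IsUnit S₁ ∧ IsUnit S₂) ↔
        R₁ ⟨0, hrpos⟩ ⟨0, hrpos⟩ ≠ 0) := by
    intro R₁ S₁ R₂ S₂ hE
    obtain ⟨Etri, Ediag, E1a, E3, E2a⟩ := endo_struct hrpos hδ hE
    constructor
    · rintro ⟨hu, -, -, -⟩ ha
      refine not_isUnit_row_zero R₁ ⟨0, hrpos⟩ (fun j => ?_) hu
      rcases Nat.eq_zero_or_pos (j : ℕ) with h | h
      · have hj : j = ⟨0, hrpos⟩ := Fin.ext h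
        rw [hj]; exact ha
      · exact Etri ⟨0, hrpos⟩ j h
    · intro ha
      have hdiag : ∀ i : Fin r, R₁ i i ≠ 0 := fun i => by rw [Ediag i]; exact ha
      have hR1 : IsUnit R₁ := isUnit_lowerTri R₁ Etri hdiag
      have hS1 : IsUnit S₁ := by
        refine isUnit_upperTri S₁ (fun i j h => ?_) (fun i => ?_)
        · rw [E3]
          refine Etri _ _ ?_
          rw [Fin.val_rev, Fin.val_rev]
          have := i.isLt; have := j.isLt; omega
        · rw [E3]; exact hdiag _
      have hR2 : IsUnit R₂ := by
        refine isUnit_lowerTri R₂ (fun i j h => ?_) (fun i => ?_)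
        · rw [E1a]; exact Etri _ _ (by simpa using h)
        · rw [E1a]; exact hdiag _
      have hS2 : IsUnit S₂ := by
        refine isUnit_upperTri S₂ (fun i j h => ?_) (fun i => ?_)
        · rw [E2a, E3]
          refine Etri _ _ ?_
          rw [Fin.val_rev, Fin.val_rev, embF_val, embF_val]
          have := i.isLt; have := j.isLt; omega
        · rw [E2a, E3]; exact hdiag _
      exact ⟨hR1, hR2, hS1, hS2⟩
  refine ⟨part1, ?_⟩
  intro R₁ S₁ R₂ S₂ R₁' S₁' R₂' S₂' hE hE' hN hN'
  have hsum : IsEndoP r δ (R₁ + R₁') (S₁ + S₁') (R₂ + R₂') (S₂ + S₂') := by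
    obtain ⟨a1, a2, a3, a4⟩ := hE
    obtain ⟨b1, b2, b3, b4⟩ := hE'
    exact ⟨by rw [Matrix.mul_add, Matrix.add_mul, a1, b1],
      by rw [Matrix.mul_add, Matrix.add_mul, a2, b2],
      by rw [Matrix.mul_add, Matrix.add_mul, a3, b3],
      by rw [Matrix.mul_add, Matrix.add_mul, a4, b4]⟩
  have ha : R₁ ⟨0, hrpos⟩ ⟨0, hrpos⟩ = 0 := by
    by_contra h
    exact hN ((part1 R₁ S₁ R₂ S₂ hE).mpr h)
  have ha' : R₁' ⟨0, hrpos⟩ ⟨0, hrpos⟩ = 0 := by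
    by_contra h
    exact hN' ((part1 R₁' S₁' R₂' S₂' hE').mpr h)
  intro hU
  refine (part1 _ _ _ _ hsum).mp hU ?_
  rw [Matrix.add_apply, ha, ha', add_zero]
end

section
/- Let F be a field of characteristic not 2 and r ≥ 1. If r is odd, then the quadruple (F_r, G_rᵀ, I_r, I_{r−1}) is not isomorphic to any quadruple (A₁, A₂, B, C) of the same dimension (r, r, r−1, r−1) satisfying A₂ = A₁ᵀ, Bᵀ = −B, and Cᵀ = C. If r is even, then the quadruple (F_r, G_rᵀ, I_r, I_{r−1}) is not isomorphic to any quadruple (A₁, A₂, B, C) of the same dimension satisfying A₂ = A₁ᵀ, Bᵀ = B, and Cᵀ = −C. -/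
open Matrix

/-- A matrix quadruple of dimension `(m₁, m₂, n₁, n₂)`:
`A₁ : n₁×m₁`, `A₂ : m₂×n₂`, `B : m₂×m₁`, `C : n₂×n₁`. -/
structure MQuad (F : Type*) [Ring F] where
  m₁ : ℕ
  m₂ : ℕ
  n₁ : ℕ
  n₂ : ℕ
  A₁ : Matrix (Fin n₁) (Fin m₁) F
  A₂ : Matrix (Fin m₂) (Fin n₂) F
  B : Matrix (Fin m₂) (Fin m₁) F
  C : Matrix (Fin n₂) (Fin n₁) F

/-- Blockwise direct sum of quadruples. -/
def MQuad.dsum {F : Type*} [Ring F] (Q Q' : MQuad F) : MQuad F where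
  m₁ := Q.m₁ + Q'.m₁
  m₂ := Q.m₂ + Q'.m₂
  n₁ := Q.n₁ + Q'.n₁
  n₂ := Q.n₂ + Q'.n₂
  A₁ := dsumM Q.A₁ Q'.A₁
  A₂ := dsumM Q.A₂ Q'.A₂
  B := dsumM Q.B Q'.B
  C := dsumM Q.C Q'.C

/-- Direct sum of a list of quadruples. -/
def qdsumList {F : Type*} [Ring F] (L : List (MQuad F)) : MQuad F :=
  L.foldr MQuad.dsum ⟨0, 0, 0, 0, 0, 0, 0, 0⟩

/-- Isomorphism of quadruples: `A₁' = Ψ₁A₁Φ₁⁻¹`, `A₂' = Φ₂A₂Ψ₂⁻¹`, `B' = Φ₂BΦ₁⁻¹`,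
`C' = Ψ₂CΨ₁⁻¹` with invertible `Φ₁, Φ₂, Ψ₁, Ψ₂`. -/
def MQuad.Iso {F : Type*} [Ring F] (Q Q' : MQuad F) : Prop :=
  ∃ (h₁ : Q.m₁ = Q'.m₁) (h₂ : Q.m₂ = Q'.m₂) (h₃ : Q.n₁ = Q'.n₁) (h₄ : Q.n₂ = Q'.n₂)
    (Φ₁ : Matrix (Fin Q.m₁) (Fin Q.m₁) F) (Φ₂ : Matrix (Fin Q.m₂) (Fin Q.m₂) F)
    (Ψ₁ : Matrix (Fin Q.n₁) (Fin Q.n₁) F) (Ψ₂ : Matrix (Fin Q.n₂) (Fin Q.n₂) F),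
    IsUnit Φ₁ ∧ IsUnit Φ₂ ∧ IsUnit Ψ₁ ∧ IsUnit Ψ₂ ∧
    castM h₃ h₁ Q'.A₁ * Φ₁ = Ψ₁ * Q.A₁ ∧
    castM h₂ h₄ Q'.A₂ * Ψ₂ = Φ₂ * Q.A₂ ∧
    castM h₂ h₁ Q'.B * Φ₁ = Φ₂ * Q.B ∧
    castM h₄ h₃ Q'.C * Ψ₁ = Ψ₂ * Q.C

/-- The dual quadruple `(A₁,A₂,B,C)° = (A₂ᵀ, A₁ᵀ, Bᵀ, Cᵀ)`. -/
def MQuad.dual {F : Type*} [Ring F] (Q : MQuad F) : MQuad F :=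
  ⟨Q.m₂, Q.m₁, Q.n₂, Q.n₁, Q.A₂ᵀ, Q.A₁ᵀ, Q.Bᵀ, Q.Cᵀ⟩

/-- Canonical quadruple (c): `(I_r, F_rᵀ, I_r, G_r)` of dimension `(r, r, r, r-1)`. -/
def quadC (F : Type*) [Ring F] (r : ℕ) : MQuad F :=
  ⟨r, r, r, r - 1, 1, (Fm F r)ᵀ, 1, Gm F r⟩

/-- Canonical quadruple (d): `(I_r, F_r, G_r, I_r)` of dimension `(r, r-1, r, r)`. -/
def quadD (F : Type*) [Ring F] (r : ℕ) : MQuad F :=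
  ⟨r, r - 1, r, r, 1, Fm F r, Gm F r, 1⟩

/-- Canonical quadruple (e): `(I_{r-1}, F_rᵀ, G_rᵀ, I_{r-1})` of dimension
`(r-1, r, r-1, r-1)`. -/
def quadE (F : Type*) [Ring F] (r : ℕ) : MQuad F :=
  ⟨r - 1, r, r - 1, r - 1, 1, (Fm F r)ᵀ, (Gm F r)ᵀ, 1⟩

/-- Canonical quadruple (f): `(I_{r-1}, F_r, I_{r-1}, G_rᵀ)` of dimension
`(r-1, r-1, r-1, r)`. -/
def quadF (F : Type*) [Ring F] (r : ℕ) : MQuad F :=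
  ⟨r - 1, r - 1, r - 1, r, 1, Fm F r, 1, (Gm F r)ᵀ⟩

lemma skew_odd_not_unit {F : Type*} [Field F] (h2 : (2 : F) ≠ 0) {n : ℕ} (hn : Odd n)
    (M : Matrix (Fin n) (Fin n) F) (h : Mᵀ = -M) : ¬ IsUnit M := by
  have hd : M.det = 0 := by
    have h1 : M.det = (-1 : F) ^ n * M.det := by
      conv_lhs => rw [← Matrix.det_transpose, h]
      rw [Matrix.det_neg, Fintype.card_fin]
    rw [hn.neg_one_pow] at h1
    have : (2 : F) * M.det = 0 := by linear_combination h1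
    exact (mul_eq_zero.mp this).resolve_left h2
  rw [Matrix.isUnit_iff_isUnit_det, hd]
  exact not_isUnit_zero

lemma castM_self {F : Type*} {m n : ℕ} (hm : m = m) (hn : n = n)
    (M : Matrix (Fin m) (Fin n) F) : castM hm hn M = M := by
  have h1 : (Fin.cast hm : Fin m → Fin m) = id := funext fun i => Fin.ext rfl
  have h2 : (Fin.cast hn : Fin n → Fin n) = id := funext fun i => Fin.ext rfl
  rw [castM, h1, h2, Matrix.submatrix_id_id]

lemma unit_of_mul_unit {F : Type*} [Field F] {n : ℕ}
    {M P Q : Matrix (Fin n) (Fin n) F} (_hP : IsUnit P) (hQ : IsUnit Q)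
    (h : M * P = Q) : IsUnit M := by
  rw [Matrix.isUnit_iff_isUnit_det] at *
  have := congrArg Matrix.det h
  rw [Matrix.det_mul] at this
  exact isUnit_of_mul_isUnit_left (this ▸ hQ)

/-- Over a field of characteristic not 2, the quadruple `(F_r, G_rᵀ, I_r, I_{r-1})` is not
isomorphic to any self-dual quadruple `(A₁, A₁ᵀ, B, C)` with `B` skew-symmetric and `C`
symmetric when `r` is odd, nor with `B` symmetric and `C` skew-symmetric when `r` is
even. -/
theorem stmt16 {F : Type*} [Field F] (h2 : (2 : F) ≠ 0) (r : ℕ) (hr : 1 ≤ r) :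
    (Odd r →
      ¬ ∃ (A₁ : Matrix (Fin (r - 1)) (Fin r) F) (B : Matrix (Fin r) (Fin r) F)
          (C : Matrix (Fin (r - 1)) (Fin (r - 1)) F),
          Bᵀ = -B ∧ Cᵀ = C ∧
          MQuad.Iso (⟨r, r, r - 1, r - 1, Fm F r, (Gm F r)ᵀ, 1, 1⟩ : MQuad F)
            ⟨r, r, r - 1, r - 1, A₁, A₁ᵀ, B, C⟩) ∧
    (Even r →
      ¬ ∃ (A₁ : Matrix (Fin (r - 1)) (Fin r) F) (B : Matrix (Fin r) (Fin r) F)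
          (C : Matrix (Fin (r - 1)) (Fin (r - 1)) F),
          Bᵀ = B ∧ Cᵀ = -C ∧
          MQuad.Iso (⟨r, r, r - 1, r - 1, Fm F r, (Gm F r)ᵀ, 1, 1⟩ : MQuad F)
            ⟨r, r, r - 1, r - 1, A₁, A₁ᵀ, B, C⟩) := by
  constructor
  · rintro hodd ⟨A₁, B, C, hB, hC, h₁, h₂, h₃, h₄, Φ₁, Φ₂, Ψ₁, Ψ₂, u1, u2, u3, u4,
      e1, e2, e3, e4⟩
    simp only [castM_self, Matrix.mul_one] at e3
    exact skew_odd_not_unit h2 hodd B hB (unit_of_mul_unit u1 u2 e3)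
  · rintro heven ⟨A₁, B, C, hB, hC, h₁, h₂, h₃, h₄, Φ₁, Φ₂, Ψ₁, Ψ₂, u1, u2, u3, u4,
      e1, e2, e3, e4⟩
    simp only [castM_self, Matrix.mul_one] at e4
    have hodd : Odd (r - 1) := by
      rcases heven with ⟨k, hk⟩
      exact ⟨k - 1, by omega⟩
    exact skew_odd_not_unit h2 hodd C hC (unit_of_mul_unit u3 u4 e4)
end

section
/- Let F be a field of characteristic not 2, r ≥ 1, and δ ∈ {1,−1}, where if δ = −1 we require r to be odd (so that r−1 is even and Z_{r−1,−1} is defined). Then the quadruple (F_r, G_rᵀ, I_r, I_{r−1}) of dimension (r, r, r−1, r−1) is isomorphic to the self-dual quadruple (F_r, F_rᵀ, Z_r, Z_{r−1,δ}); in particular, for δ = 1 an isomorphism is given by (Φ₁, Φ₂, Ψ₁, Ψ₂) = (I_r, Z_r, I_{r−1}, Z_{r−1}), using the identity Z_r G_rᵀ Z_{r−1} = F_rᵀ. -/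
open Matrix

/-!
Reversing rows and columns turns the superdiagonal of `G_rᵀ` into the diagonal of `F_rᵀ`, so
`Z_r G_rᵀ Z_{r-1} = F_rᵀ`; this settles `δ = 1` with `(I_r, Z_r, I_{r-1}, Z_{r-1})`.
In general `Z_{r-1,δ} = Z_{r-1} · diag(c_j)` with `c_j = δ` exactly for `j ≥ ⌈(r-1)/2⌉`.
Twisting all four transition matrices by `D = diag(δ ^ (k - ⌊r/2⌋))` rescales column `j` of
`G_rᵀ` by `d_{j+1} / d_j = c_j`, which absorbs the signs, while `D` commutes past `F_r`.
-/

section Antidiagonal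

variable {F : Type*}

theorem Zm_eq_toMatrix_revPerm [Zero F] [One F] (n : ℕ) :
    Zm F n = (Fin.revPerm : Equiv.Perm (Fin n)).toPEquiv.toMatrix := by
  ext i j
  simp only [Zm, of_apply, PEquiv.toMatrix_toPEquiv_apply, Fin.revPerm_apply,
    Pi.single_apply, Fin.ext_iff, Fin.val_rev]
  congr 1
  grind

theorem Zm_mul [NonAssocSemiring F] {n p : ℕ} (M : Matrix (Fin n) (Fin p) F) :
    Zm F n * M = M.submatrix Fin.rev id := by
  rw [Zm_eq_toMatrix_revPerm, PEquiv.toMatrix_toPEquiv_mul]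
  rfl

theorem mul_Zm [NonAssocSemiring F] {p n : ℕ} (M : Matrix (Fin p) (Fin n) F) :
    M * Zm F n = M.submatrix id Fin.rev := by
  rw [Zm_eq_toMatrix_revPerm, PEquiv.mul_toMatrix_toPEquiv]
  rfl

theorem Zm_mul_Zm [NonAssocSemiring F] (n : ℕ) : Zm F n * Zm F n = 1 := by
  rw [Zm_mul, Zm_eq_toMatrix_revPerm]
  ext i j
  simp [one_apply]

theorem isUnit_Zm [Semiring F] (n : ℕ) : IsUnit (Zm F n) :=
  ⟨⟨Zm F n, Zm F n, Zm_mul_Zm n, Zm_mul_Zm n⟩, rfl⟩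

theorem ZmS_one [Zero F] [One F] (n : ℕ) : ZmS n (1 : F) = Zm F n := by
  ext i j
  simp only [ZmS, Zm, of_apply, ite_self]

theorem Zm_mul_Gm_transpose_mul_Zm [NonAssocSemiring F] (r : ℕ) :
    Zm F r * (Gm F r)ᵀ * Zm F (r - 1) = (Fm F r)ᵀ := by
  rw [Zm_mul, mul_Zm]
  ext i j
  simp only [submatrix_apply, transpose_apply, Gm, Fm, of_apply, id, Fin.val_rev]
  grind

theorem Fm_transpose_mul_Zm [Semiring F] (r : ℕ) :
    (Fm F r)ᵀ * Zm F (r - 1) = Zm F r * (Gm F r)ᵀ := by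
  rw [← Zm_mul_Gm_transpose_mul_Zm, Matrix.mul_assoc, Zm_mul_Zm, Matrix.mul_one]

theorem ZmS_eq_Zm_mul_diagonal [NonAssocSemiring F] (s : ℕ) (δ : F) :
    ZmS s δ = Zm F s * diagonal fun j : Fin s => if (s + 1) / 2 ≤ (j : ℕ) then δ else 1 := by
  rw [Zm_mul]
  ext i j
  simp only [ZmS, of_apply, submatrix_apply, diagonal_apply, id, Fin.ext_iff, Fin.val_rev]
  grind

theorem isUnit_ZmS [CommRing F] {δ : F} (hδ : IsUnit δ) (s : ℕ) : IsUnit (ZmS s δ) := by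
  rw [ZmS_eq_Zm_mul_diagonal]
  refine (isUnit_Zm s).mul (isUnit_diagonal.mpr (Pi.isUnit_iff.mpr fun j => ?_))
  split_ifs
  exacts [hδ, isUnit_one]

end Antidiagonal

section Diagonal

variable {F : Type*} [NonAssocSemiring F] (d : ℕ → F)

theorem Fm_mul_diagonal (r : ℕ) :
    Fm F r * diagonal (fun j : Fin r => d j) = diagonal (fun i : Fin (r - 1) => d i) * Fm F r := by
  ext i j
  simp only [mul_diagonal, diagonal_mul, Fm, of_apply]
  split_ifs with h <;> simp [h]

theorem Gm_transpose_mul_diagonal (r : ℕ) :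
    (Gm F r)ᵀ * diagonal (fun j : Fin (r - 1) => d (j + 1)) =
      diagonal (fun i : Fin r => d i) * (Gm F r)ᵀ := by
  ext i j
  simp only [mul_diagonal, diagonal_mul, transpose_apply, Gm, of_apply]
  split_ifs with h <;> simp [h]

end Diagonal

theorem ite_mul_pow_tsub {M : Type*} [Monoid M] (δ : M) (m j : ℕ) :
    (if m ≤ j then δ else 1) * δ ^ (j - m) = δ ^ (j + 1 - m) := by
  split_ifs with h
  · rw [← pow_succ', Nat.sub_add_comm h]
  · rw [one_mul, Nat.sub_eq_zero_of_le (by omega), Nat.sub_eq_zero_of_le (by omega)]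

abbrev twistDiagonal {F : Type*} [Monoid F] [Zero F] (δ : F) (r n : ℕ) :
    Matrix (Fin n) (Fin n) F :=
  diagonal fun k : Fin n => δ ^ ((k : ℕ) - r / 2)

theorem isUnit_twistDiagonal {F : Type*} [CommRing F] {δ : F} (hδ : IsUnit δ) (r n : ℕ) :
    IsUnit (twistDiagonal δ r n) :=
  isUnit_diagonal.mpr (Pi.isUnit_iff.mpr fun _ => hδ.pow _)

theorem Fm_transpose_mul_ZmS_mul_twistDiagonal {F : Type*} [Semiring F] (r : ℕ) (δ : F) :
    (Fm F r)ᵀ * (ZmS (r - 1) δ * twistDiagonal δ r (r - 1)) =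
      Zm F r * twistDiagonal δ r r * (Gm F r)ᵀ := by
  have hshift : (fun j : Fin (r - 1) => (if (r - 1 + 1) / 2 ≤ (j : ℕ) then δ else 1) *
      δ ^ ((j : ℕ) - r / 2)) = fun j : Fin (r - 1) => δ ^ ((j : ℕ) + 1 - r / 2) := by
    funext j
    rw [show (r - 1 + 1) / 2 = r / 2 by have := j.isLt; omega, ite_mul_pow_tsub]
  rw [ZmS_eq_Zm_mul_diagonal, Matrix.mul_assoc, diagonal_mul_diagonal, hshift,
    ← Matrix.mul_assoc, Fm_transpose_mul_Zm, Matrix.mul_assoc, Matrix.mul_assoc,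
    Gm_transpose_mul_diagonal (fun k => δ ^ (k - r / 2))]

theorem stmt17_general {F : Type*} [Field F] (r : ℕ)
    (δ : F) (hδ : δ = 1 ∨ δ = -1) :
    MQuad.Iso (⟨r, r, r - 1, r - 1, Fm F r, (Gm F r)ᵀ, 1, 1⟩ : MQuad F)
        ⟨r, r, r - 1, r - 1, Fm F r, (Fm F r)ᵀ, Zm F r, ZmS (r - 1) δ⟩ ∧
      Zm F r * (Gm F r)ᵀ * Zm F (r - 1) = (Fm F r)ᵀ ∧
      (δ = 1 →
        IsUnit (Zm F r) ∧ IsUnit (Zm F (r - 1)) ∧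
        (Fm F r)ᵀ * Zm F (r - 1) = Zm F r * (Gm F r)ᵀ ∧
        ZmS (r - 1) δ = Zm F (r - 1)) := by
  have hδu : IsUnit δ := by rcases hδ with rfl | rfl <;> simp
  have hD : ∀ n, IsUnit (twistDiagonal δ r n) := isUnit_twistDiagonal hδu r
  refine ⟨⟨rfl, rfl, rfl, rfl, twistDiagonal δ r r, Zm F r * twistDiagonal δ r r,
      twistDiagonal δ r (r - 1), ZmS (r - 1) δ * twistDiagonal δ r (r - 1),
      hD r, (isUnit_Zm r).mul (hD r), hD (r - 1), (isUnit_ZmS hδu _).mul (hD (r - 1)),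
      Fm_mul_diagonal (fun k => δ ^ (k - r / 2)) r, Fm_transpose_mul_ZmS_mul_twistDiagonal r δ,
      (Matrix.mul_one _).symm, (Matrix.mul_one _).symm⟩,
    Zm_mul_Gm_transpose_mul_Zm r, ?_⟩
  rintro rfl
  exact ⟨isUnit_Zm r, isUnit_Zm (r - 1), Fm_transpose_mul_Zm r, ZmS_one (r - 1)⟩

/-- Over a field of characteristic not 2, the quadruple `(F_r, G_rᵀ, I_r, I_{r-1})` is
isomorphic to the self-dual quadruple `(F_r, F_rᵀ, Z_r, Z_{r-1,δ})`; moreover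
`Z_r G_rᵀ Z_{r-1} = F_rᵀ`, and for `δ = 1` an isomorphism is given by
`(Φ₁, Φ₂, Ψ₁, Ψ₂) = (I_r, Z_r, I_{r-1}, Z_{r-1})`. -/
theorem stmt17 {F : Type*} [Field F] (h2 : (2 : F) ≠ 0) (r : ℕ) (hr : 1 ≤ r)
    (δ : F) (hδ : δ = 1 ∨ δ = -1) (hodd : δ = -1 → Odd r) :
    MQuad.Iso (⟨r, r, r - 1, r - 1, Fm F r, (Gm F r)ᵀ, 1, 1⟩ : MQuad F)
        ⟨r, r, r - 1, r - 1, Fm F r, (Fm F r)ᵀ, Zm F r, ZmS (r - 1) δ⟩ ∧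
      Zm F r * (Gm F r)ᵀ * Zm F (r - 1) = (Fm F r)ᵀ ∧
      (δ = 1 →
        IsUnit (Zm F r) ∧ IsUnit (Zm F (r - 1)) ∧
        (Fm F r)ᵀ * Zm F (r - 1) = Zm F r * (Gm F r)ᵀ ∧
        ZmS (r - 1) δ = Zm F (r - 1)) :=
  stmt17_general r δ hδ
end
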